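/- Suppose each ε_j is irrational. Then the set of periodic points of Φ on the page P equals {p₀, q₀}: Φ(p₀) = p₀ and Φ(q₀) = q₀, and conversely, if w ∈ P and Φ^k(w) = w for some integer k ≥ 1, then w = p₀ or w = q₀. -/

import Mathlib

open Complex

/-- The index `2(j+1)` in `Fin (2m+2)`, for `j : Fin m`. -/
def idxA (m : ℕ) (j : Fin m) : Fin (2 * m + 2) := ⟨2 * j.val + 2, by have := j.isLt; omega⟩

/-- The index `2(j+1)+1` in `Fin (2m+2)`, for `j : Fin m`. -/
def idxB (m : ℕ) (j : Fin m) : Fin (2 * m + 2) := ⟨2 * j.val + 3, by have := j.isLt; omega⟩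

/-- The rotation weights of the return map: `δ₀ = δ₁ = 0`, `δ_{2j} = ε_j`,
`δ_{2j+1} = −ε_j`. -/
def wtPhi (m : ℕ) (ε : Fin m → ℝ) : Fin (2 * m + 2) → ℝ := fun k =>
  if h : k.val ≤ 1 then 0
  else if k.val % 2 = 0 then ε ⟨k.val / 2 - 1, by have := k.isLt; omega⟩
  else -ε ⟨k.val / 2 - 1, by have := k.isLt; omega⟩

/-- The map `Φ : ℂ^{n+1} → ℂ^{n+1}` (`n = 2m+1`): `Φ(w)_k = e^{2π i δ_k}·w_k`, i.e.
`Φ(w)₀ = w₀`, `Φ(w)₁ = w₁`, `Φ(w)_{2j} = e^{2πiε_j}w_{2j}`,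
`Φ(w)_{2j+1} = e^{−2πiε_j}w_{2j+1}`. -/
noncomputable def PhiMap (m : ℕ) (ε : Fin m → ℝ) (w : Fin (2 * m + 2) → ℂ) :
    Fin (2 * m + 2) → ℂ :=
  fun k => Complex.exp (2 * (Real.pi : ℂ) * Complex.I * ((wtPhi m ε k : ℝ) : ℂ)) * w k

/-- The Brieskorn sphere `Σ ⊆ ℂ^{n+1}`, `n = 2m+1`. -/
def brSphere (m : ℕ) : Set (Fin (2 * m + 2) → ℂ) :=
  { w | w ⟨0, by omega⟩ ^ 2 + w ⟨1, by omega⟩ ^ 2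
          - 2 * Complex.I * ∑ j : Fin m, w (idxA m j) * w (idxB m j) = 0 ∧
        ∑ k, ‖w k‖ ^ 2 = 1 }

/-- The page `P = {w ∈ Σ : w₀ real and w₀ ≥ 0}`. -/
def pageP (m : ℕ) : Set (Fin (2 * m + 2) → ℂ) :=
  { w | w ∈ brSphere m ∧ (w ⟨0, by omega⟩).im = 0 ∧ 0 ≤ (w ⟨0, by omega⟩).re }

/-- The point `p₀ = (1/√2, i/√2, 0, …, 0)`. -/
noncomputable def pPt (m : ℕ) : Fin (2 * m + 2) → ℂ := fun k =>
  if k.val = 0 then (1 / (Real.sqrt 2 : ℂ))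
  else if k.val = 1 then Complex.I / (Real.sqrt 2 : ℂ)
  else 0

/-- The point `q₀ = (1/√2, −i/√2, 0, …, 0)`. -/
noncomputable def qPt (m : ℕ) : Fin (2 * m + 2) → ℂ := fun k =>
  if k.val = 0 then (1 / (Real.sqrt 2 : ℂ))
  else if k.val = 1 then -Complex.I / (Real.sqrt 2 : ℂ)
  else 0

/-!
Φ multiplies the coordinates of index `≥ 2` by `e^{±2πiε_j}`, and no nonzero power of such a
rotation is the identity when `ε_j` is irrational. So a periodic point lies in the
`(w₀, w₁)`-plane, where the equation of `Σ` becomes `w₀² + w₁² = 0`, i.e. `w₁ = ±i w₀`; the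
unit norm and `w₀ ≥ 0` then force `w₀ = 1/√2`.
-/

theorem Irrational.cexp_two_pi_I_mul_pow_ne_one {θ : ℝ} (hθ : Irrational θ) {k : ℕ}
    (hk : k ≠ 0) : cexp (2 * Real.pi * I * θ) ^ k ≠ 1 := by
  rw [← Complex.exp_nat_mul, Ne, Complex.exp_eq_one_iff]
  rintro ⟨n, hn⟩
  have h2piI : (2 * Real.pi * I : ℂ) ≠ 0 := by simp [Real.pi_ne_zero, I_ne_zero]
  have hkθ : ((k * θ : ℝ) : ℂ) = n :=
    mul_left_cancel₀ h2piI (by push_cast; linear_combination hn)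
  exact (hθ.natCast_mul hk).ne_int n (by exact_mod_cast hkθ)

theorem Complex.eq_I_mul_or_eq_neg_I_mul_of_sq_add_sq_eq_zero {a b : ℂ}
    (h : a ^ 2 + b ^ 2 = 0) : b = I * a ∨ b = -(I * a) := by
  have hfac : (b - I * a) * (b + I * a) = 0 := by linear_combination h - a ^ 2 * I_sq
  rcases mul_eq_zero.mp hfac with h | h
  · exact .inl (sub_eq_zero.mp h)
  · exact .inr (eq_neg_of_add_eq_zero_left h)

theorem Complex.eq_one_div_sqrt_two_of_norm_sq {a : ℂ} (him : a.im = 0) (hre : 0 ≤ a.re)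
    (hnorm : 2 * ‖a‖ ^ 2 = 1) : a = 1 / (Real.sqrt 2 : ℂ) := by
  obtain ⟨r, rfl⟩ : ∃ r : ℝ, a = r := ⟨a.re, Complex.ext rfl (by simp [him])⟩
  rw [ofReal_re] at hre
  rw [Complex.norm_of_nonneg hre] at hnorm
  have hr : r * Real.sqrt 2 = 1 := by
    refine (pow_left_inj₀ (by positivity) zero_le_one two_ne_zero).mp ?_
    rw [mul_pow, Real.sq_sqrt zero_le_two]
    linarith
  rw [eq_div_iff (by simp)]
  exact_mod_cast hr

section PhiMap

variable {m : ℕ} {ε : Fin m → ℝ}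

theorem wtPhi_irrational (hε : ∀ j, Irrational (ε j)) {k : Fin (2 * m + 2)} (hk : 2 ≤ k.val) :
    Irrational (wtPhi m ε k) := by
  unfold wtPhi
  rw [dif_neg (by omega)]
  split
  · exact hε _
  · exact (hε _).neg

theorem iterate_PhiMap_apply (n : ℕ) (w : Fin (2 * m + 2) → ℂ) (k : Fin (2 * m + 2)) :
    (PhiMap m ε)^[n] w k = cexp (2 * Real.pi * I * wtPhi m ε k) ^ n * w k := by
  induction n generalizing w with
  | zero => simp
  | succ n ih =>
    rw [Function.iterate_succ_apply, ih, PhiMap]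
    ring

theorem PhiMap_eq_self_of_eq_zero {w : Fin (2 * m + 2) → ℂ}
    (hw : ∀ k : Fin (2 * m + 2), 2 ≤ k.val → w k = 0) : PhiMap m ε w = w := by
  funext k
  by_cases hk : k.val ≤ 1
  · simp [PhiMap, wtPhi, hk]
  · simp [PhiMap, hw k (by omega)]

theorem eq_zero_of_iterate_PhiMap_eq (hε : ∀ j, Irrational (ε j)) {w : Fin (2 * m + 2) → ℂ}
    {n : ℕ} (hn : n ≠ 0) (hper : (PhiMap m ε)^[n] w = w) {k : Fin (2 * m + 2)}
    (hk : 2 ≤ k.val) : w k = 0 := by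
  have hwk := congrFun hper k
  rw [iterate_PhiMap_apply] at hwk
  by_contra hne
  exact (wtPhi_irrational hε hk).cexp_two_pi_I_mul_pow_ne_one hn
    (mul_right_cancel₀ hne (hwk.trans (one_mul _).symm))

end PhiMap

section Plane

variable {m : ℕ}

theorem eq_of_eq_zero_of_apply_zero_of_apply_one {v w : Fin (2 * m + 2) → ℂ}
    (hv : ∀ k : Fin (2 * m + 2), 2 ≤ k.val → v k = 0)
    (hw : ∀ k : Fin (2 * m + 2), 2 ≤ k.val → w k = 0)
    (h0 : v ⟨0, by omega⟩ = w ⟨0, by omega⟩) (h1 : v ⟨1, by omega⟩ = w ⟨1, by omega⟩) :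
    v = w := by
  funext ⟨k, hk⟩
  match k with
  | 0 => exact h0
  | 1 => exact h1
  | k + 2 => rw [hv _ (by simp), hw _ (by simp)]

theorem sum_norm_sq_of_eq_zero {w : Fin (2 * m + 2) → ℂ}
    (hw : ∀ k : Fin (2 * m + 2), 2 ≤ k.val → w k = 0) :
    ∑ k, ‖w k‖ ^ 2 = ‖w ⟨0, by omega⟩‖ ^ 2 + ‖w ⟨1, by omega⟩‖ ^ 2 := by
  rw [Fin.sum_univ_succ, Fin.sum_univ_succ, Finset.sum_eq_zero fun k _ => ?_]
  · simp
  · simp [hw k.succ.succ (by simp)]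

theorem pPt_apply_of_two_le {k : Fin (2 * m + 2)} (hk : 2 ≤ k.val) : pPt m k = 0 := by
  simp only [pPt]
  rw [if_neg (by omega), if_neg (by omega)]

theorem qPt_apply_of_two_le {k : Fin (2 * m + 2)} (hk : 2 ≤ k.val) : qPt m k = 0 := by
  simp only [qPt]
  rw [if_neg (by omega), if_neg (by omega)]

end Plane

theorem Phi_periodic_points_general (m : ℕ) (ε : Fin m → ℝ)
    (hε : ∀ j, Irrational (ε j)) :
    PhiMap m ε (pPt m) = pPt m ∧ PhiMap m ε (qPt m) = qPt m ∧
    ∀ w ∈ pageP m, ∀ k : ℕ, 1 ≤ k → (PhiMap m ε)^[k] w = w → w = pPt m ∨ w = qPt m := by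
  refine ⟨PhiMap_eq_self_of_eq_zero fun _ ↦ pPt_apply_of_two_le,
    PhiMap_eq_self_of_eq_zero fun _ ↦ qPt_apply_of_two_le, ?_⟩
  rintro w ⟨⟨hquad, hnorm⟩, him, hre⟩ k hk hper
  have hw : ∀ j : Fin (2 * m + 2), 2 ≤ j.val → w j = 0 :=
    fun j hj ↦ eq_zero_of_iterate_PhiMap_eq hε (by omega) hper hj
  have hcross : ∑ j : Fin m, w (idxA m j) * w (idxB m j) = 0 :=
    Finset.sum_eq_zero fun j _ ↦ by rw [hw (idxA m j) (by simp [idxA]), zero_mul]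
  rw [hcross, mul_zero, sub_zero] at hquad
  rw [sum_norm_sq_of_eq_zero hw] at hnorm
  have hw1 := Complex.eq_I_mul_or_eq_neg_I_mul_of_sq_add_sq_eq_zero hquad
  have hw0 : w ⟨0, by omega⟩ = 1 / (Real.sqrt 2 : ℂ) := by
    refine Complex.eq_one_div_sqrt_two_of_norm_sq him hre ?_
    rcases hw1 with h | h <;> rw [h] at hnorm <;> simpa [two_mul] using hnorm
  rcases hw1 with h | h
  · refine .inl (eq_of_eq_zero_of_apply_zero_of_apply_one hw
      (fun _ ↦ pPt_apply_of_two_le) ?_ ?_)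
    · rw [hw0]; simp [pPt]
    · rw [h, hw0]; simp [pPt, div_eq_mul_inv]
  · refine .inr (eq_of_eq_zero_of_apply_zero_of_apply_one hw
      (fun _ ↦ qPt_apply_of_two_le) ?_ ?_)
    · rw [hw0]; simp [qPt]
    · rw [h, hw0]; simp [qPt, div_eq_mul_inv]

/-- Suppose each `ε_j` is irrational.  Then the set of periodic points of `Φ` on the page
`P` equals `{p₀, q₀}`: `Φ(p₀) = p₀`, `Φ(q₀) = q₀`, and conversely if `w ∈ P` and
`Φ^k(w) = w` for some integer `k ≥ 1`, then `w = p₀` or `w = q₀`. -/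
theorem Phi_periodic_points (m : ℕ) (hm : 1 ≤ m) (ε : Fin m → ℝ)
    (hε : ∀ j, Irrational (ε j)) :
    PhiMap m ε (pPt m) = pPt m ∧ PhiMap m ε (qPt m) = qPt m ∧
    ∀ w ∈ pageP m, ∀ k : ℕ, 1 ≤ k → (PhiMap m ε)^[k] w = w → w = pPt m ∨ w = qPt m :=
  Phi_periodic_points_general m ε hε
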